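/- There exists a universal constant c > 0 such that the following holds. Let k and r be reals with 2 ≤ k ≤ r, let C ≥ 1 and α > 1, let A ∈ ℝ^{n×m} and b ∈ ℝ^n. Suppose x₀ satisfies Ax₀ = b and ‖x₀‖_k^k ≤ C·‖x‖_k^k for every x with Ax = b; suppose the minimum of ‖x‖_r^r over {x : Ax = b} is attained at x*, and ‖x₀‖_r^r > α‖x*‖_r^r. Define the residual at x₀ by g_e = |x₀ₑ|^{r−2}x₀ₑ and r_e = |x₀ₑ|^{r−2}. Then c·(α−1)·‖x₀‖_r^r / (C^{r/k} · r · m^{r/k−1}) ≤ sup{res_r(Δ) : AΔ = 0} ≤ ‖x₀‖_r^r. -/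

import Mathlib

/-!
Coordinatewise, `|a|^(p-2) a δ ≤ max(|a|, |δ|)^p ≤ |a|^p + |δ|^p`, so no residual value exceeds
`‖x₀‖_r^r`.

For the lower bound, `|·|^p` is uniformly convex in the form
`|a + d|^p ≥ |a|^p + p g(a) d + (p/4) w(a) d² + (|d|/2)^p / 4`, where `g(a) = |a|^(p-2) a` and
`w(a) = |a|^(p-2)` are the gradient and weight of the residual. With `a = x₀`, `d = x* - x₀` this
gives `g·(x₀ - x*) ≥ (‖x₀‖_r^r - ‖x*‖_r^r)/r` plus enough quadratic and `r`-th power mass that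
the feasible step `Δ = (x₀ - x*)/64` has residual value at least `(‖x₀‖_r^r - ‖x*‖_r^r)/(64 r)`.
Comparing `ℓ_k` with `ℓ_r` norms, `‖x₀‖_r^r ≤ C^(r/k) m^(r/k-1) ‖x*‖_r^r`, and together with
`‖x₀‖_r^r > α ‖x*‖_r^r` this bounds `‖x₀‖_r^r - ‖x*‖_r^r` below by
`(α - 1) ‖x₀‖_r^r / (C^(r/k) m^(r/k-1))`.
-/

/-- The residual objective `res_p(Δ) = g^⊤Δ − 2∑_e w_e Δ_e² − ‖Δ‖_p^p`. -/
noncomputable def res {m : ℕ} (g w : Fin m → ℝ) (p : ℝ) (Δ : Fin m → ℝ) : ℝ :=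
  (∑ e, g e * Δ e) - 2 * (∑ e, w e * Δ e ^ 2) - ∑ e, |Δ e| ^ p

open Real Finset

lemma one_add_mul_add_mul_sq_le_abs_one_add_rpow {p : ℝ} (hp : 2 ≤ p) (x : ℝ) :
    1 + p * x + p / 2 * x ^ 2 ≤ |1 + x| ^ p := by
  have hsq : |1 + x| ^ p = (1 + (2 * x + x ^ 2)) ^ (p / 2) := by
    rw [show 1 + (2 * x + x ^ 2) = |1 + x| ^ 2 by rw [sq_abs]; ring,
      ← rpow_natCast_mul (abs_nonneg _), Nat.cast_ofNat, mul_div_cancel₀ p two_ne_zero]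
  have := one_add_mul_self_le_rpow_one_add (s := 2 * x + x ^ 2) (by nlinarith [sq_nonneg (x + 1)])
    (p := p / 2) (by linarith)
  linarith

lemma one_add_mul_add_mul_sq_add_half_rpow_le_abs_one_add_rpow {p : ℝ} (hp : 2 ≤ p) (d : ℝ) :
    1 + p * d + p / 4 * d ^ 2 + (|d| / 2) ^ p / 4 ≤ |1 + d| ^ p := by
  have hquad := one_add_mul_add_mul_sq_le_abs_one_add_rpow hp d
  -- For `|d| ≤ 2` the last term is absorbed by the quadratic one, for `|d| > 2` by `|1 + d| ^ p`.
  rcases le_or_gt |d| 2 with hsmall | hlarge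
  · have : (|d| / 2) ^ p ≤ (|d| / 2) ^ (2 : ℝ) :=
      rpow_le_rpow_of_exponent_ge' (by positivity) (by linarith) (by norm_num) hp
    rw [rpow_two, div_pow, sq_abs] at this
    nlinarith [sq_nonneg d]
  rcases lt_or_gt_of_ne (show d ≠ 0 by rintro rfl; norm_num at hlarge) with hneg | hpos
  · have hd : 2 < -d := by rwa [abs_of_neg hneg] at hlarge
    have : (|d| / 2) ^ p ≤ |1 + d| ^ p :=
      rpow_le_rpow (by positivity) (by rw [abs_of_neg hneg, abs_of_neg (by linarith)]; linarith)
        (by linarith)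
    nlinarith
  · have hd : 2 < d := by rwa [abs_of_pos hpos] at hlarge
    have h1 : d ^ p ≤ |1 + d| ^ p :=
      rpow_le_rpow hpos.le (by rw [abs_of_pos (by linarith)]; linarith) (by linarith)
    have h2 : 4 * (d / 2) ^ p ≤ d ^ p := by
      have h4 : (4 : ℝ) ≤ 2 ^ p := by
        simpa [show (2 : ℝ) ^ (2 : ℝ) = 4 by norm_num] using
          rpow_le_rpow_of_exponent_le (x := (2 : ℝ)) (by norm_num) hp
      rw [div_rpow hpos.le (by norm_num), mul_div_assoc', div_le_iff₀ (by positivity)]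
      rw [mul_comm]; exact mul_le_mul_of_nonneg_left h4 (rpow_nonneg hpos.le p)
    rw [abs_of_pos hpos] at *
    nlinarith [mul_pos (by linarith : 0 < p) (by linarith : 0 < d - 2)]

lemma abs_rpow_add_mul_add_mul_sq_add_half_rpow_le_abs_add_rpow {p : ℝ} (hp : 2 ≤ p) (a d : ℝ) :
    |a| ^ p + p * (|a| ^ (p - 2) * a * d) + p / 4 * (|a| ^ (p - 2) * d ^ 2) + (|d| / 2) ^ p / 4
      ≤ |a + d| ^ p := by
  rcases eq_or_ne a 0 with rfl | ha
  · rcases hp.eq_or_lt with rfl | hp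
    · simp only [zero_add, abs_zero, sub_self, rpow_zero, rpow_two, div_pow, sq_abs]
      nlinarith [sq_nonneg d]
    · rw [zero_add, abs_zero, zero_rpow (by linarith), zero_rpow (by linarith),
        div_rpow (abs_nonneg d) (by norm_num)]
      have : 1 ≤ (2 : ℝ) ^ p := one_le_rpow (by norm_num) (by linarith)
      have : |d| ^ p / 2 ^ p ≤ |d| ^ p := div_le_self (by positivity) this
      simp only [mul_zero, zero_mul, add_zero, zero_add]
      linarith [show 0 ≤ |d| ^ p / 2 ^ p by positivity]
  have hA : |a| ^ p = |a| ^ (p - 2) * a ^ 2 := by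
    rw [← sq_abs a, ← rpow_two, ← rpow_add (abs_pos.mpr ha), sub_add_cancel]
  have key := mul_le_mul_of_nonneg_left
    (one_add_mul_add_mul_sq_add_half_rpow_le_abs_one_add_rpow hp (d / a))
    (rpow_nonneg (abs_nonneg a) p)
  have h1 : |a| ^ p * |1 + d / a| ^ p = |a + d| ^ p := by
    rw [← mul_rpow (abs_nonneg _) (abs_nonneg _), ← abs_mul, mul_one_add, mul_div_cancel₀ d ha]
  have h2 : |a| ^ p * (|d / a| / 2) ^ p = (|d| / 2) ^ p := by
    rw [← mul_rpow (abs_nonneg _) (by positivity), abs_div, mul_div_assoc',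
      mul_div_cancel₀ _ (abs_ne_zero.mpr ha)]
  have h3 : |a| ^ p * (1 + p * (d / a) + p / 4 * (d / a) ^ 2)
      = |a| ^ p + p * (|a| ^ (p - 2) * a * d) + p / 4 * (|a| ^ (p - 2) * d ^ 2) := by
    rw [hA]; field_simp
  rw [mul_add, h3, h1, mul_div_assoc', h2] at key
  exact key

lemma abs_rpow_sub_two_mul_mul_le {p : ℝ} (hp : 1 ≤ p) (a δ : ℝ) :
    |a| ^ (p - 2) * a * δ ≤ |a| ^ p + |δ| ^ p := by
  rcases eq_or_ne a 0 with rfl | ha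
  · simp only [mul_zero, zero_mul]; positivity
  have hM : 0 ≤ max |a| |δ| := le_max_of_le_left (abs_nonneg a)
  calc |a| ^ (p - 2) * a * δ ≤ |a| ^ (p - 2) * |a| * |δ| := by
        rw [mul_assoc, mul_assoc, ← abs_mul]
        exact mul_le_mul_of_nonneg_left (le_abs_self _) (by positivity)
    _ = |a| ^ (p - 1) * |δ| := by
        rw [← rpow_add_one (abs_ne_zero.mpr ha), show p - 2 + 1 = p - 1 by ring]
    _ ≤ max |a| |δ| ^ (p - 1) * max |a| |δ| :=
        mul_le_mul (rpow_le_rpow (abs_nonneg a) (le_max_left _ _) (by linarith))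
          (le_max_right _ _) (abs_nonneg δ) (by positivity)
    _ = max |a| |δ| ^ p := by rw [← rpow_add_one' hM (by linarith), sub_add_cancel]
    _ ≤ |a| ^ p + |δ| ^ p := by
        rcases max_cases |a| |δ| with ⟨h, -⟩ | ⟨h, -⟩ <;> rw [h] <;>
          linarith [rpow_nonneg (abs_nonneg a) p, rpow_nonneg (abs_nonneg δ) p]

lemma mul_le_thirtytwo_rpow {p : ℝ} (hp : 2 ≤ p) : 256 * p ≤ 32 ^ p := by
  have h := one_add_mul_self_le_rpow_one_add (s := 31) (by norm_num) (p := p - 1) (by linarith)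
  rw [show (1 : ℝ) + 31 = 32 by norm_num, rpow_sub_one (by norm_num)] at h
  rw [le_div_iff₀ (by norm_num)] at h
  linarith

lemma abs_rpow_sub_abs_rpow_div_le {p : ℝ} (hp : 2 ≤ p) (a b : ℝ) :
    (|a| ^ p - |b| ^ p) / (64 * p) ≤
      |a| ^ (p - 2) * a * (64⁻¹ * (a - b)) - 2 * (|a| ^ (p - 2) * (64⁻¹ * (a - b)) ^ 2)
        - |64⁻¹ * (a - b)| ^ p := by
  have hconv := abs_rpow_add_mul_add_mul_sq_add_half_rpow_le_abs_add_rpow hp a (b - a)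
  rw [add_sub_cancel, abs_sub_comm] at hconv
  set u := |a| ^ (p - 2)
  set T := (|a - b| / 64) ^ p
  have hu : 0 ≤ u := by positivity
  have hT : 0 ≤ T := by positivity
  have hT64 : |64⁻¹ * (a - b)| ^ p = T := by
    rw [abs_mul, abs_of_pos (by norm_num : (0 : ℝ) < 64⁻¹), inv_mul_eq_div]
  have hT2 : (|a - b| / 2) ^ p = 32 ^ p * T := by
    rw [← mul_rpow (by norm_num) (by positivity)]; ring_nf
  have hp32 : 64 * p * T ≤ 32 ^ p * T / 4 := by
    nlinarith [mul_le_mul_of_nonneg_right (mul_le_thirtytwo_rpow hp) hT]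
  rw [hT2] at hconv
  rw [hT64, div_le_iff₀ (by positivity)]
  nlinarith [mul_nonneg (by linarith : (0 : ℝ) ≤ p) (mul_nonneg hu (sq_nonneg (a - b)))]

lemma sum_rpow_le_rpow_sum {ι : Type*} (s : Finset ι) {f : ι → ℝ} {q : ℝ} (hq : 1 ≤ q)
    (hf : ∀ i ∈ s, 0 ≤ f i) : ∑ i ∈ s, f i ^ q ≤ (∑ i ∈ s, f i) ^ q := by
  have hS : 0 ≤ ∑ i ∈ s, f i := sum_nonneg hf
  have hsplit : ∀ t : ℝ, 0 ≤ t → t ^ q = t ^ (q - 1) * t := fun t ht => by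
    rw [← rpow_add_one' ht (by linarith), sub_add_cancel]
  calc ∑ i ∈ s, f i ^ q = ∑ i ∈ s, f i ^ (q - 1) * f i :=
        sum_congr rfl fun i hi => hsplit _ (hf i hi)
    _ ≤ ∑ i ∈ s, (∑ j ∈ s, f j) ^ (q - 1) * f i :=
        sum_le_sum fun i hi => mul_le_mul_of_nonneg_right
          (rpow_le_rpow (hf i hi) (single_le_sum hf hi) (by linarith)) (hf i hi)
    _ = (∑ i ∈ s, f i) ^ q := by rw [← mul_sum, hsplit _ hS]

section Fintype

variable {ι : Type*} [Fintype ι] {k r : ℝ}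

lemma abs_rpow_rpow_div (hk : 0 < k) (t : ℝ) : (|t| ^ k) ^ (r / k) = |t| ^ r := by
  rw [← rpow_mul (abs_nonneg t), mul_div_cancel₀ r hk.ne']

lemma sum_abs_rpow_le_rpow_sum_abs_rpow (hk : 0 < k) (hkr : k ≤ r) (x : ι → ℝ) :
    ∑ i, |x i| ^ r ≤ (∑ i, |x i| ^ k) ^ (r / k) := by
  have := sum_rpow_le_rpow_sum univ ((one_le_div hk).mpr hkr)
    fun i _ => rpow_nonneg (abs_nonneg (x i)) k
  simpa only [abs_rpow_rpow_div hk] using this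

lemma rpow_sum_abs_rpow_le_card_mul (hk : 0 < k) (hkr : k ≤ r) (x : ι → ℝ) :
    (∑ i, |x i| ^ k) ^ (r / k) ≤ (Fintype.card ι : ℝ) ^ (r / k - 1) * ∑ i, |x i| ^ r := by
  have := rpow_sum_le_const_mul_sum_rpow_of_nonneg univ ((one_le_div hk).mpr hkr)
    fun i _ => rpow_nonneg (abs_nonneg (x i)) k
  simpa only [abs_rpow_rpow_div hk, card_univ] using this

lemma sum_abs_rpow_le_of_sum_abs_rpow_le {C : ℝ} (hC : 0 ≤ C) (hk : 0 < k) (hkr : k ≤ r)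
    {x y : ι → ℝ} (h : ∑ i, |x i| ^ k ≤ C * ∑ i, |y i| ^ k) :
    ∑ i, |x i| ^ r ≤ C ^ (r / k) * (Fintype.card ι : ℝ) ^ (r / k - 1) * ∑ i, |y i| ^ r :=
  calc ∑ i, |x i| ^ r ≤ (∑ i, |x i| ^ k) ^ (r / k) := sum_abs_rpow_le_rpow_sum_abs_rpow hk hkr x
    _ ≤ (C * ∑ i, |y i| ^ k) ^ (r / k) :=
        rpow_le_rpow (by positivity) h (div_pos (hk.trans_le hkr) hk).le
    _ = C ^ (r / k) * (∑ i, |y i| ^ k) ^ (r / k) := mul_rpow hC (by positivity)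
    _ ≤ C ^ (r / k) * (Fintype.card ι : ℝ) ^ (r / k - 1) * ∑ i, |y i| ^ r := by
        rw [mul_assoc]
        exact mul_le_mul_of_nonneg_left (rpow_sum_abs_rpow_le_card_mul hk hkr y) (by positivity)

end Fintype

lemma sub_one_mul_div_le_sub {α F G M : ℝ} (hα : 1 < α) (hG : 0 ≤ G) (hgap : α * G < F)
    (hFM : F ≤ M * G) : (α - 1) * F / M ≤ F - G := by
  have hMα : α < M := by nlinarith
  rw [div_le_iff₀ (by linarith)]
  nlinarith

lemma res_eq_sum {m : ℕ} (g w : Fin m → ℝ) (p : ℝ) (Δ : Fin m → ℝ) :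
    res g w p Δ = ∑ e, (g e * Δ e - 2 * (w e * Δ e ^ 2) - |Δ e| ^ p) := by
  simp only [res, sum_sub_distrib, mul_sum]

lemma res_le_sum_abs_rpow {m : ℕ} {p : ℝ} (hp : 1 ≤ p) (x Δ : Fin m → ℝ) :
    res (fun e => |x e| ^ (p - 2) * x e) (fun e => |x e| ^ (p - 2)) p Δ ≤ ∑ e, |x e| ^ p := by
  rw [res_eq_sum]
  refine sum_le_sum fun e _ => ?_
  have := abs_rpow_sub_two_mul_mul_le hp (x e) (Δ e)
  have : 0 ≤ |x e| ^ (p - 2) * Δ e ^ 2 := by positivity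
  linarith

lemma sum_abs_rpow_sub_div_le_res {m : ℕ} {p : ℝ} (hp : 2 ≤ p) (x y : Fin m → ℝ) :
    (∑ e, |x e| ^ p - ∑ e, |y e| ^ p) / (64 * p) ≤
      res (fun e => |x e| ^ (p - 2) * x e) (fun e => |x e| ^ (p - 2)) p ((64 : ℝ)⁻¹ • (x - y)) := by
  rw [res_eq_sum, ← sum_sub_distrib, sum_div]
  exact sum_le_sum fun e _ => abs_rpow_sub_abs_rpow_div_le hp (x e) (y e)

/-- Lemma B.3, BinarySearch: the value of the `r`-norm residual problem
at a `C`-approximate `k`-norm minimizer `x₀` lies in the stated range.  Here the residual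
at `x₀` has gradient `g_e = |x₀ₑ|^{r−2}x₀ₑ` and weights `|x₀ₑ|^{r−2}`. -/
theorem stmt_8 :
    ∃ c : ℝ, 0 < c ∧
      ∀ (n m : ℕ) (k r : ℝ), 2 ≤ k → k ≤ r →
        ∀ (C α : ℝ), 1 ≤ C → 1 < α →
          ∀ (A : Matrix (Fin n) (Fin m) ℝ) (b : Fin n → ℝ) (x₀ xs : Fin m → ℝ),
            A.mulVec x₀ = b →
            (∀ x, A.mulVec x = b → (∑ e, |x₀ e| ^ k) ≤ C * ∑ e, |x e| ^ k) →
            A.mulVec xs = b →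
            (∀ x, A.mulVec x = b → (∑ e, |xs e| ^ r) ≤ ∑ e, |x e| ^ r) →
            α * (∑ e, |xs e| ^ r) < (∑ e, |x₀ e| ^ r) →
            c * (α - 1) * (∑ e, |x₀ e| ^ r)
                / (C ^ (r / k) * r * (m : ℝ) ^ (r / k - 1))
              ≤ sSup {y | ∃ Δ : Fin m → ℝ, A.mulVec Δ = 0 ∧
                  y = res (fun e => |x₀ e| ^ (r - 2) * x₀ e) (fun e => |x₀ e| ^ (r - 2)) r Δ} ∧
            sSup {y | ∃ Δ : Fin m → ℝ, A.mulVec Δ = 0 ∧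
                  y = res (fun e => |x₀ e| ^ (r - 2) * x₀ e) (fun e => |x₀ e| ^ (r - 2)) r Δ}
              ≤ ∑ e, |x₀ e| ^ r := by
  refine ⟨64⁻¹, by norm_num, ?_⟩
  intro n m k r hk hkr C α hC hα A b x₀ xs hx₀ hx₀min hxs _ hgap
  have hr : 2 ≤ r := hk.trans hkr
  have hub : ∀ y ∈ {y | ∃ Δ : Fin m → ℝ, A.mulVec Δ = 0 ∧
      y = res (fun e => |x₀ e| ^ (r - 2) * x₀ e) (fun e => |x₀ e| ^ (r - 2)) r Δ},
      y ≤ ∑ e, |x₀ e| ^ r := by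
    rintro _ ⟨Δ, -, rfl⟩
    exact res_le_sum_abs_rpow (by linarith) x₀ Δ
  refine ⟨?_, Real.sSup_le hub (by positivity)⟩
  have hcomp := sum_abs_rpow_le_of_sum_abs_rpow_le (by linarith) (by linarith) hkr (hx₀min xs hxs)
  rw [Fintype.card_fin] at hcomp
  have hΔ : A.mulVec ((64 : ℝ)⁻¹ • (x₀ - xs)) = 0 := by
    rw [Matrix.mulVec_smul, Matrix.mulVec_sub, hx₀, hxs, sub_self, smul_zero]
  calc 64⁻¹ * (α - 1) * (∑ e, |x₀ e| ^ r) / (C ^ (r / k) * r * (m : ℝ) ^ (r / k - 1))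
      = (α - 1) * (∑ e, |x₀ e| ^ r) / (C ^ (r / k) * (m : ℝ) ^ (r / k - 1)) / (64 * r) := by
        ring
    _ ≤ (∑ e, |x₀ e| ^ r - ∑ e, |xs e| ^ r) / (64 * r) :=
        div_le_div_of_nonneg_right (sub_one_mul_div_le_sub hα (by positivity) hgap hcomp)
          (by positivity)
    _ ≤ _ := sum_abs_rpow_sub_div_le_res hr x₀ xs
    _ ≤ _ := le_csSup ⟨_, hub⟩ ⟨_, hΔ, rfl⟩
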